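/- arXiv:2007.14324 — 3 statements merged into one kernel-verified Lean document; each statement's English description precedes it below -/
import Mathlib

section
/- For every positive integer b, the sum ∑_{d ∣ b} A(d) over the positive divisors d of b equals the number of pairs (a,c) ∈ ℤ² with a² + c² = 2b², and this in turn equals r₂(b²), the number of pairs (x,y) ∈ ℤ² with x² + y² = b². -/
/-!
Every solution of `x² + y² = k b²` is uniquely `g • (a, c)`, where `g = gcd(x, y, b)` divides `b`
and `(a, c)` solves `a² + c² = k (b/g)²` with `gcd(a, c, b/g) = 1`; grouping solutions by `g`
gives the divisor sum. The map `(x, y) ↦ (x + y, x - y)` is a bijection from the solutions of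
`x² + y² = m` onto those of `u² + v² = 2m`, because `u² + v²` even forces `u ≡ v (mod 2)`.
-/

/-- `A n` is the number of pairs `(a, c) ∈ ℤ²` with `a² + c² = 2n²` and `gcd(a, c, n) = 1`. -/
noncomputable def A (n : ℕ) : ℕ :=
  Set.ncard {p : ℤ × ℤ | p.1 ^ 2 + p.2 ^ 2 = 2 * (n : ℤ) ^ 2 ∧
    Int.gcd (Int.gcd p.1 p.2) (n : ℤ) = 1}

def primitiveSolutions (k : ℤ) (n : ℕ) : Set (ℤ × ℤ) :=
  {p | p.1 ^ 2 + p.2 ^ 2 = k * n ^ 2 ∧ Int.gcd (Int.gcd p.1 p.2) n = 1}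

lemma finite_setOf_sq_add_sq_eq (m : ℤ) : {p : ℤ × ℤ | p.1 ^ 2 + p.2 ^ 2 = m}.Finite := by
  refine ((Set.finite_Icc (-m) m).prod (Set.finite_Icc (-m) m)).subset ?_
  rintro ⟨x, y⟩ (h : x ^ 2 + y ^ 2 = m)
  have hx := Int.natAbs_le_self_sq x
  have hy := Int.natAbs_le_self_sq y
  simp only [Set.mem_prod, Set.mem_Icc]
  omega

lemma Int.gcd_gcd_mul_natCast_left (g : ℕ) (a c d : ℤ) :
    Int.gcd (Int.gcd (g * a) (g * c)) (g * d) = g * Int.gcd (Int.gcd a c) d := by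
  simp [Int.gcd_mul_left]

lemma image_smul_primitiveSolutions (k : ℤ) {g d b : ℕ} (hg : 0 < g) (hb : g * d = b) :
    (fun p : ℤ × ℤ => (g : ℤ) • p) '' primitiveSolutions k d =
      {p | p.1 ^ 2 + p.2 ^ 2 = k * b ^ 2 ∧ Int.gcd (Int.gcd p.1 p.2) b = g} := by
  subst hb
  push_cast
  ext ⟨x, y⟩
  constructor
  · rintro ⟨⟨a, c⟩, ⟨heq, hgcd⟩, h⟩
    simp only [Prod.smul_mk, smul_eq_mul, Prod.mk.injEq] at h
    obtain ⟨rfl, rfl⟩ := h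
    refine ⟨by linear_combination (g : ℤ) ^ 2 * heq, ?_⟩
    rw [Int.gcd_gcd_mul_natCast_left, hgcd, mul_one]
  · rintro ⟨heq, hgcd⟩
    obtain ⟨a, rfl⟩ : (g : ℤ) ∣ x := hgcd ▸ (Int.gcd_dvd_left _ _).trans (Int.gcd_dvd_left _ _)
    obtain ⟨c, rfl⟩ : (g : ℤ) ∣ y := hgcd ▸ (Int.gcd_dvd_left _ _).trans (Int.gcd_dvd_right _ _)
    have hg2 : (g : ℤ) ^ 2 ≠ 0 := by positivity
    refine ⟨(a, c), ⟨mul_left_cancel₀ hg2 (by linear_combination heq), ?_⟩, rfl⟩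
    rw [Int.gcd_gcd_mul_natCast_left] at hgcd
    exact (Nat.mul_eq_left hg.ne').mp hgcd

theorem sum_ncard_primitiveSolutions (k : ℤ) {b : ℕ} (hb : b ≠ 0) :
    ∑ d ∈ b.divisors, (primitiveSolutions k d).ncard =
      {p : ℤ × ℤ | p.1 ^ 2 + p.2 ^ 2 = k * b ^ 2}.ncard := by
  classical
  set gcdWith : ℤ × ℤ → ℕ := fun p => Int.gcd (Int.gcd p.1 p.2) b
  have hfin := finite_setOf_sq_add_sq_eq (k * b ^ 2)
  have hmaps : Set.MapsTo gcdWith hfin.toFinset b.divisors := fun p _ =>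
    Nat.mem_divisors.mpr ⟨Int.ofNat_dvd.mp (Int.gcd_dvd_right _ _), hb⟩
  rw [Set.ncard_eq_toFinset_card _ hfin, Finset.card_eq_sum_card_fiberwise hmaps,
    ← Nat.sum_div_divisors]
  refine Finset.sum_congr rfl fun g hg => ?_
  have hgb := Nat.dvd_of_mem_divisors hg
  have hg0 : (g : ℤ) ≠ 0 := by exact_mod_cast (Nat.pos_of_mem_divisors hg).ne'
  rw [← Set.ncard_coe_finset, ← Set.ncard_image_of_injective (primitiveSolutions k (b / g))
    (smul_right_injective (ℤ × ℤ) hg0), image_smul_primitiveSolutions k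
    (Nat.pos_of_mem_divisors hg) (Nat.mul_div_cancel' hgb)]
  congr 1
  ext p
  simp [gcdWith]

theorem ncard_sq_add_sq_eq_two_mul (m : ℤ) :
    {p : ℤ × ℤ | p.1 ^ 2 + p.2 ^ 2 = 2 * m}.ncard = {p : ℤ × ℤ | p.1 ^ 2 + p.2 ^ 2 = m}.ncard := by
  have hinj : Function.Injective fun q : ℤ × ℤ => (q.1 + q.2, q.1 - q.2) := by
    rintro ⟨x, y⟩ ⟨x', y'⟩ h
    simp only [Prod.mk.injEq] at h ⊢
    omega
  rw [← Set.ncard_image_of_injective {p : ℤ × ℤ | p.1 ^ 2 + p.2 ^ 2 = m} hinj]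
  congr 1
  ext ⟨u, v⟩
  simp only [Set.mem_ofPred_eq, Set.mem_image, Prod.mk.injEq, Prod.exists]
  constructor
  · intro h
    obtain ⟨x, hx⟩ : Even (u + v) := by
      have hsq : Even (u ^ 2 + v ^ 2) := ⟨m, by linarith⟩
      simpa [Int.even_add, Int.even_pow] using hsq
    refine ⟨x, x - v, ?_, by omega, by omega⟩
    obtain rfl : u = 2 * x - v := by omega
    exact mul_left_cancel₀ two_ne_zero (by linear_combination h)
  · rintro ⟨x, y, h, rfl, rfl⟩
    linear_combination 2 * h

theorem stmt_6 (b : ℕ) (hb : 0 < b) :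
    (∑ d ∈ b.divisors, A d)
        = Set.ncard {p : ℤ × ℤ | p.1 ^ 2 + p.2 ^ 2 = 2 * (b : ℤ) ^ 2} ∧
      Set.ncard {p : ℤ × ℤ | p.1 ^ 2 + p.2 ^ 2 = 2 * (b : ℤ) ^ 2}
        = Set.ncard {p : ℤ × ℤ | p.1 ^ 2 + p.2 ^ 2 = (b : ℤ) ^ 2} :=
  ⟨sum_ncard_primitiveSolutions 2 hb.ne', ncard_sq_add_sq_eq_two_mul _⟩
end

section
/- Let θ(z) = ∑_{n ∈ ℤ} exp(2πi·n²·z) for z in the upper half-plane (Im z > 0). Then for every z with Im z > 0: θ(2z/(4z+1)) = (4z+1)^(1/2)·(θ(z/2) − θ(2z)), where (4z+1)^(1/2) denotes the principal branch of the square root (note Im(4z+1) > 0, so 4z+1 avoids the branch cut, and Im(2z/(4z+1)) > 0). -/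
open Real Complex

/-- The classical Jacobi theta function `θ(z) = ∑_{n ∈ ℤ} exp(2πi n² z)`. -/
noncomputable def jacobiTheta' (z : ℂ) : ℂ :=
  ∑' n : ℤ, Complex.exp (2 * π * Complex.I * (n : ℂ) ^ 2 * z)

private lemma jacobiTheta'_eq (z : ℂ) : jacobiTheta' z = jacobiTheta (2 * z) := by
  refine tsum_congr fun n => ?_
  congr 1
  ring

private lemma summable_theta_term {τ : ℂ} (hτ : 0 < τ.im) :
    Summable (fun n : ℤ => Complex.exp (π * Complex.I * (n : ℂ) ^ 2 * τ)) := by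
  have := (summable_jacobiTheta₂_term_iff 0 τ).mpr hτ
  simpa [jacobiTheta₂_term] using this

private lemma jacobiTheta_S {τ : ℂ} (h0 : τ ≠ 0) :
    jacobiTheta (-1 / τ) = (-Complex.I * τ) ^ ((1 : ℂ) / 2) * jacobiTheta τ := by
  have h1 : (-Complex.I * τ) ^ ((1 : ℂ) / 2) ≠ 0 := by
    rw [Ne, cpow_eq_zero_iff, not_and_or]
    exact Or.inl (mul_ne_zero (neg_ne_zero.mpr I_ne_zero) h0)
  simp_rw [jacobiTheta_eq_jacobiTheta₂]
  have h := jacobiTheta₂_functional_equation 0 τ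
  rw [zero_pow two_ne_zero, mul_zero, zero_div, Complex.exp_zero, mul_one] at h
  rw [h, ← mul_assoc, mul_one_div, div_self h1, one_mul]

private lemma jacobiTheta_dup {v : ℂ} (hv : 0 < v.im) :
    jacobiTheta (1 + v) = 2 * jacobiTheta (4 * v) - jacobiTheta v := by
  have h1 : (0 : ℝ) < (1 + v).im := by simpa using hv
  have hsv := summable_theta_term hv
  have hs1 := summable_theta_term h1
  have key : ∀ n : ℤ, Complex.exp (π * Complex.I * (n : ℂ) ^ 2 * v)
      + Complex.exp (π * Complex.I * (n : ℂ) ^ 2 * (1 + v))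
      = (1 + (-1 : ℂ) ^ (n ^ 2)) * Complex.exp (π * Complex.I * (n : ℂ) ^ 2 * v) := by
    intro n
    have : Complex.exp (π * Complex.I * (n : ℂ) ^ 2 * (1 + v))
        = Complex.exp (((n ^ 2 : ℤ) : ℂ) * (π * Complex.I))
          * Complex.exp (π * Complex.I * (n : ℂ) ^ 2 * v) := by
      rw [← Complex.exp_add]
      congr 1
      push_cast
      ring
    rw [this, Complex.exp_int_mul, Complex.exp_pi_mul_I]
    ring
  have hsum : jacobiTheta v + jacobiTheta (1 + v)
      = ∑' n : ℤ, (1 + (-1 : ℂ) ^ (n ^ 2)) * Complex.exp (π * Complex.I * (n : ℂ) ^ 2 * v) := by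
    rw [jacobiTheta, jacobiTheta, ← Summable.tsum_add hsv hs1]
    exact tsum_congr key
  have hinj : Function.Injective (fun m : ℤ => 2 * m) := fun a b h => by
    simpa using h
  have hsupp : Function.support
      (fun n : ℤ => (1 + (-1 : ℂ) ^ (n ^ 2)) * Complex.exp (π * Complex.I * (n : ℂ) ^ 2 * v))
      ⊆ Set.range (fun m : ℤ => 2 * m) := by
    intro n hn
    rcases Int.even_or_odd n with he | ho
    · obtain ⟨m, hm⟩ := he
      exact ⟨m, by show 2 * m = n; omega⟩
    · exfalso
      apply hn
      have hodd : Odd (n ^ 2) := ho.pow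
      simp [hodd.neg_one_zpow]
  have heq2 : ∑' n : ℤ, (1 + (-1 : ℂ) ^ (n ^ 2)) * Complex.exp (π * Complex.I * (n : ℂ) ^ 2 * v)
      = 2 * jacobiTheta (4 * v) := by
    rw [← hinj.tsum_eq hsupp, jacobiTheta, ← tsum_mul_left]
    refine tsum_congr fun m => ?_
    have heven : Even ((2 * m) ^ 2) := ⟨2 * m ^ 2, by ring⟩
    rw [heven.neg_one_zpow]
    have : Complex.exp (π * Complex.I * ((2 * m : ℤ) : ℂ) ^ 2 * v)
        = Complex.exp (π * Complex.I * (m : ℂ) ^ 2 * (4 * v)) := by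
      congr 1
      push_cast
      ring
    rw [this]
    ring
  linear_combination hsum + heq2

private lemma mul_cpow_half {x y : ℂ} (hx : 0 < x.re) (hy : 0 < y.re) :
    (x * y) ^ ((1 : ℂ) / 2) = x ^ ((1 : ℂ) / 2) * y ^ ((1 : ℂ) / 2) := by
  have hx0 : x ≠ 0 := fun h => by simp [h] at hx
  have hy0 : y ≠ 0 := fun h => by simp [h] at hy
  have hax := Complex.abs_arg_lt_pi_div_two_iff.mpr (Or.inl hx)
  have hay := Complex.abs_arg_lt_pi_div_two_iff.mpr (Or.inl hy)
  rw [abs_lt] at hax hay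
  have harg : x.arg + y.arg ∈ Set.Ioc (-π) π :=
    ⟨by linarith [hax.1, hay.1], by linarith [hax.2, hay.2]⟩
  rw [Complex.cpow_def_of_ne_zero (mul_ne_zero hx0 hy0), Complex.cpow_def_of_ne_zero hx0,
    Complex.cpow_def_of_ne_zero hy0, ← Complex.exp_add, Complex.log_mul hx0 hy0 harg]
  congr 1
  ring

private lemma four_cpow_half : (4 : ℂ) ^ ((1 : ℂ) / 2) = 2 := by
  rw [show (4 : ℂ) = ((4 : ℝ) : ℂ) by norm_num,
    show ((1 : ℂ) / 2) = (((1 / 2 : ℝ) : ℝ) : ℂ) by push_cast; ring,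
    ← Complex.ofReal_cpow (by norm_num : (0 : ℝ) ≤ 4)]
  norm_cast
  rw [show (4 : ℝ) = 2 ^ (2 : ℕ) by norm_num, ← Real.rpow_natCast 2 2,
    ← Real.rpow_mul (by norm_num)]
  norm_num

theorem stmt_12 (z : ℂ) (hz : 0 < z.im) :
    jacobiTheta' (2 * z / (4 * z + 1))
      = (4 * z + 1) ^ ((1 : ℂ) / 2) *
          (jacobiTheta' (z / 2) - jacobiTheta' (2 * z)) := by
  have hz0 : z ≠ 0 := fun h => by simp [h] at hz
  have ht0 : (4 : ℂ) * z ≠ 0 := mul_ne_zero (by norm_num) hz0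
  have htim : 0 < ((4 : ℂ) * z).im := by
    have : ((4 : ℂ) * z).im = 4 * z.im := by simp [Complex.mul_im]
    rw [this]; linarith
  have ht1 : (4 : ℂ) * z + 1 ≠ 0 := by
    intro h
    have := congrArg Complex.im h
    simp [Complex.add_im, Complex.mul_im] at this
    linarith
  have hvim : 0 < (-1 / ((4 : ℂ) * z)).im := by
    have h : (-1 / ((4 : ℂ) * z)) = -(((4 : ℂ) * z)⁻¹) := by ring
    rw [h, Complex.neg_im, Complex.inv_im, neg_div, neg_neg]
    exact div_pos htim (Complex.normSq_pos.mpr ht0)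
  set u : ℂ := -1 - 1 / (4 * z) with hu
  have huim : 0 < u.im := by
    have h : u = -1 + (-1 / ((4 : ℂ) * z)) := by rw [hu]; ring
    rw [h, Complex.add_im]
    simpa using hvim
  have hu0 : u ≠ 0 := fun h => by rw [h] at huim; simp at huim
  -- rewrite theta' in terms of jacobiTheta
  have hu4 : u * (4 * z) = -(4 * z) - 1 := by
    rw [hu, sub_mul, one_div, inv_mul_cancel₀ ht0]
    ring
  rw [jacobiTheta'_eq, jacobiTheta'_eq, jacobiTheta'_eq,
    show (2 : ℂ) * (z / 2) = z by ring, show (2 : ℂ) * (2 * z) = 4 * z by ring,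
    show (2 : ℂ) * (2 * z / (4 * z + 1)) = -1 / u by
      rw [eq_div_iff hu0, mul_div_assoc', div_mul_eq_mul_div, div_eq_iff ht1]
      linear_combination hu4]
  have hJu : jacobiTheta u = jacobiTheta (1 + (-1 / (4 * z))) := by
    rw [show (1 : ℂ) + (-1 / (4 * z)) = 2 + u by rw [hu]; ring, jacobiTheta_two_add]
  have hdup := jacobiTheta_dup hvim
  have h4v : (4 : ℂ) * (-1 / (4 * z)) = -1 / z := by
    rw [mul_div_assoc', div_eq_div_iff ht0 hz0]
    ring
  have hSz := jacobiTheta_S hz0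
  have hSt := jacobiTheta_S ht0
  have hreu : 0 < (-Complex.I * u).re := by
    have h : (-Complex.I * u).re = u.im := by simp [Complex.mul_re]
    rw [h]; exact huim
  have hret : 0 < (-Complex.I * (4 * z)).re := by
    have h : (-Complex.I * ((4 : ℂ) * z)).re = ((4 : ℂ) * z).im := by simp [Complex.mul_re]
    rw [h]; exact htim
  have hrez : 0 < (-Complex.I * z).re := by
    have h : (-Complex.I * z).re = z.im := by simp [Complex.mul_re]
    rw [h]; exact hz
  have hI : Complex.I ^ 2 = -1 := Complex.I_sq
  have hmul1 : (-Complex.I * u) * (-Complex.I * (4 * z)) = 4 * z + 1 := by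
    linear_combination (u * (4 * z)) * hI - hu4
  have h2 : (-Complex.I * u) ^ ((1 : ℂ) / 2) * (-Complex.I * (4 * z)) ^ ((1 : ℂ) / 2)
      = (4 * z + 1) ^ ((1 : ℂ) / 2) := by
    rw [← mul_cpow_half hreu hret, hmul1]
  have h1 : (-Complex.I * (4 * z)) ^ ((1 : ℂ) / 2) = 2 * (-Complex.I * z) ^ ((1 : ℂ) / 2) := by
    rw [show -Complex.I * (4 * z) = 4 * (-Complex.I * z) by ring,
      mul_cpow_half (by norm_num) hrez, four_cpow_half]
  rw [jacobiTheta_S hu0, hJu, hdup, h4v, hSz, hSt]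
  linear_combination (-((-Complex.I * u) ^ ((1 : ℂ) / 2) * jacobiTheta z)) * h1
    + (jacobiTheta z - jacobiTheta (4 * z)) * h2
end

section
/- Let σ > 0, ε > 0, C₀ > 0, x > 1 and z > 0 be real numbers. Let u : ℝ → ℝ be a continuously differentiable nonincreasing function with 0 ≤ u ≤ 1, u(t) = 1 for t ≤ 1, and u(t) = 0 for t ≥ 1 + 1/x, and let U(w) = ∫_0^∞ u(t)·t^(w−1) dt be its Mellin transform. Let F be a continuous complex-valued function on the vertical line Re w = σ satisfying |F(σ + it)| ≤ C₀·(1 + |t|)^(−ε) for all t ∈ ℝ. Suppose H : [0,∞) → ℂ is continuously differentiable and satisfies H(y) = (1/(2π))·∫_{t ∈ ℝ} F(σ + it)·y^(σ+it)/(σ + it) dt for every y > 0. Then |(1/(2π))·∫_{t ∈ ℝ} F(σ + it)·U(σ + it)·z^(σ+it) dt − H(z)| ≤ (z/x)·sup{ |H′(y)| : z ≤ y ≤ z·(1 + 1/x) }. -/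
/-!
Integrating by parts in the Mellin transform gives `w U(w) = ∫_1^{1+1/x} (-u'(τ)) τ^w dτ`.
Inserting this and swapping the integrals (Fubini, legitimate because `F(σ+it)/(σ+it)` is
integrable), the smoothed integral becomes `∫_1^{1+1/x} (-u'(τ)) H(zτ) dτ`, an average of `H`
over `[z, z(1+1/x)]` against the probability density `-u' ≥ 0`. Its distance from `H(z)` is
then bounded by the mean value inequality.
-/

open Real Complex MeasureTheory Set

theorem mul_le_norm_ofReal_add_mul_I {σ : ℝ} (hσ : 0 ≤ σ) (t : ℝ) :
    min σ 1 * (1 + |t|) / 2 ≤ ‖(σ : ℂ) + t * I‖ := by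
  have hre : σ ≤ ‖(σ : ℂ) + t * I‖ := by
    simpa [abs_of_nonneg hσ] using abs_re_le_norm ((σ : ℂ) + t * I)
  have him : |t| ≤ ‖(σ : ℂ) + t * I‖ := by
    simpa using abs_im_le_norm ((σ : ℂ) + t * I)
  have h1 : min σ 1 ≤ σ := min_le_left σ 1
  have h2 : min σ 1 * |t| ≤ |t| := mul_le_of_le_one_left (abs_nonneg t) (min_le_right σ 1)
  linarith

theorem integrable_div_ofReal_add_mul_I {σ ε C : ℝ} (hσ : 0 < σ) (hε : 0 < ε) {F : ℝ → ℂ}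
    (hF : AEStronglyMeasurable F) (hF_le : ∀ t, ‖F t‖ ≤ C * (1 + |t|) ^ (-ε)) :
    Integrable fun t : ℝ => F t / ((σ : ℂ) + t * I) := by
  have hm : 0 < min σ 1 := lt_min hσ one_pos
  refine Integrable.mono' ((integrable_one_add_norm (E := ℝ) (r := 1 + ε)
    (by simp; linarith)).const_mul (2 * C / min σ 1)) ?_ (ae_of_all _ fun t => ?_)
  · exact hF.div₀
      (continuous_const.add (continuous_ofReal.mul continuous_const)).aestronglyMeasurable
  · have ht : 0 < 1 + |t| := by positivity
    calc ‖F t / ((σ : ℂ) + t * I)‖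
        ≤ C * (1 + |t|) ^ (-ε) / (min σ 1 * (1 + |t|) / 2) := by
          rw [norm_div]
          exact div_le_div₀ ((norm_nonneg _).trans (hF_le t)) (hF_le t) (by positivity)
            (mul_le_norm_ofReal_add_mul_I hσ.le t)
      _ = 2 * C / min σ 1 * (1 + ‖t‖) ^ (-(1 + ε)) := by
          rw [Real.norm_eq_abs, neg_add, rpow_add ht, rpow_neg_one]
          field_simp

theorem norm_integral_smul_sub_le {α E : Type*} [MeasurableSpace α] [NormedAddCommGroup E]
    [NormedSpace ℝ E] [CompleteSpace E] {μ : Measure α} {φ : α → ℝ} {f : α → E} {c : E} {K : ℝ}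
    (hφ_nonneg : ∀ᵐ a ∂μ, 0 ≤ φ a) (hφ : Integrable φ μ) (hφ_one : ∫ a, φ a ∂μ = 1)
    (hφf : Integrable (fun a => φ a • f a) μ) (hf : ∀ᵐ a ∂μ, ‖f a - c‖ ≤ K) :
    ‖∫ a, φ a • f a ∂μ - c‖ ≤ K := by
  calc ‖∫ a, φ a • f a ∂μ - c‖ = ‖∫ a, φ a • (f a - c) ∂μ‖ := by
        simp only [smul_sub]
        rw [integral_sub hφf (hφ.smul_const c), integral_smul_const, hφ_one, one_smul]
    _ ≤ ∫ a, φ a * K ∂μ := by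
        refine norm_integral_le_of_norm_le (hφ.mul_const K) ?_
        filter_upwards [hφ_nonneg, hf] with a ha hfa
        rw [norm_smul, Real.norm_of_nonneg ha]
        exact mul_le_mul_of_nonneg_left hfa ha
    _ = K := by rw [integral_mul_const, hφ_one, one_mul]

theorem norm_sub_le_sSup_norm_deriv_mul {E : Type*} [NormedAddCommGroup E] [NormedSpace ℝ E]
    {H : ℝ → E} {s : Set ℝ} (hH : ContDiffOn ℝ 1 H s) (hs : IsOpen s) {a b y : ℝ}
    (hab : Icc a b ⊆ s) (hy : y ∈ Icc a b) :
    ‖H y - H a‖ ≤ (y - a) * sSup ((fun y => ‖deriv H y‖) '' Icc a b) := by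
  rw [mul_comm]
  have hbdd : BddAbove ((fun y => ‖deriv H y‖) '' Icc a b) :=
    (isCompact_Icc.image_of_continuousOn
      ((hH.continuousOn_deriv_of_isOpen hs le_rfl).mono hab).norm).bddAbove
  refine norm_image_sub_le_of_norm_deriv_le_segment' (fun t ht => ?_)
    (fun t ht => le_csSup hbdd (mem_image_of_mem _ (Ico_subset_Icc_self ht))) y hy
  exact ((hH.differentiableOn one_ne_zero t (hab ht)).differentiableAt
    (hs.mem_nhds (hab ht))).hasDerivAt.hasDerivWithinAt

theorem deriv_eq_zero_of_forall_le_eq {u : ℝ → ℝ} (hu : Continuous (deriv u)) {a c : ℝ}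
    (hu_const : ∀ t ≤ a, u t = c) : ∀ t ≤ a, deriv u t = 0 := by
  have h : EqOn (deriv u) 0 (Iio a) := fun t ht => by
    have : u =ᶠ[nhds t] fun _ => c :=
      Filter.eventually_of_mem (Iio_mem_nhds ht) fun s hs => hu_const s (le_of_lt hs)
    simpa using this.deriv_eq
  intro t ht
  exact h.closure hu continuous_const (by rwa [closure_Iio])

theorem mul_setIntegral_cpow_sub_one_eq_neg {u : ℝ → ℝ} (hu : ContDiff ℝ 1 u) {B : ℝ}
    (hB : 0 ≤ B) (hu_zero : ∀ t, B ≤ t → u t = 0) {w : ℂ} (hw : 0 < w.re) :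
    w * ∫ t in Ioi 0, (u t : ℂ) * (t : ℂ) ^ (w - 1)
      = -∫ t in Ioc 0 B, ((deriv u t : ℝ) : ℂ) * (t : ℂ) ^ w := by
  have hw0 : w ≠ 0 := fun h => by simp [h] at hw
  have hu_diff : Differentiable ℝ u := hu.differentiable one_ne_zero
  have hIoc : ∫ t in Ioi 0, (u t : ℂ) * (t : ℂ) ^ (w - 1)
      = ∫ t in Ioc 0 B, (u t : ℂ) * (t : ℂ) ^ (w - 1) :=
    setIntegral_eq_of_subset_of_forall_sdiff_eq_zero measurableSet_Ioi Ioc_subset_Ioi_self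
      fun t ht => by simp [hu_zero t (not_le.mp fun h => ht.2 ⟨ht.1, h⟩).le]
  have hparts := intervalIntegral.integral_mul_deriv_eq_deriv_mul_of_hasDerivAt
    (a := 0) (b := B) (u := fun t => (u t : ℂ)) (v := fun t : ℝ => (t : ℂ) ^ w / w)
    (continuous_ofReal.comp hu_diff.continuous).continuousOn
    ((continuous_ofReal_cpow_const hw).div_const w).continuousOn
    (fun t _ => (hu_diff t).hasDerivAt.ofReal_comp)
    (fun t ht => by
      simpa using hasDerivAt_ofReal_cpow_const' (x := t) (r := w - 1)
        (min_eq_left hB ▸ ht.1).ne' (by simpa [sub_eq_neg_self] using hw0))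
    ((continuous_ofReal.comp (hu.continuous_deriv le_rfl)).intervalIntegrable 0 B)
    (intervalIntegral.intervalIntegrable_cpow' (by simpa using hw))
  rw [hIoc, ← intervalIntegral.integral_of_le hB, hparts, ← intervalIntegral.integral_of_le hB]
  simp only [hu_zero B le_rfl, ofReal_zero, zero_mul, zero_cpow hw0, zero_div,
    mul_zero, sub_zero, zero_sub, mul_div_assoc', intervalIntegral.integral_div]
  field_simp

theorem mul_setIntegral_cpow_sub_one_eq_setIntegral_Ioc {u : ℝ → ℝ} (hu : ContDiff ℝ 1 u)
    {a B c : ℝ} (ha : 0 ≤ a) (hB : 0 ≤ B) (hu_const : ∀ t ≤ a, u t = c)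
    (hu_zero : ∀ t, B ≤ t → u t = 0) {w : ℂ} (hw : 0 < w.re) :
    w * ∫ t in Ioi 0, (u t : ℂ) * (t : ℂ) ^ (w - 1)
      = ∫ t in Ioc a B, ((-deriv u t : ℝ) : ℂ) * (t : ℂ) ^ w := by
  have hu' := deriv_eq_zero_of_forall_le_eq (hu.continuous_deriv le_rfl) hu_const
  rw [mul_setIntegral_cpow_sub_one_eq_neg hu hB hu_zero hw,
    ← setIntegral_eq_of_subset_of_forall_sdiff_eq_zero measurableSet_Ioc
      (Ioc_subset_Ioc_left ha) fun t ht => ?_]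
  · simp only [ofReal_neg, neg_mul, integral_neg]
  · simp [hu' t (not_lt.mp fun h => ht.2 ⟨h, ht.1.2⟩)]

theorem integral_mul_setIntegral_cpow_comm {G φ : ℝ → ℂ} (hG : Integrable G) {a b c σ : ℝ}
    (ha : 0 ≤ a) (hc : 0 < c) (hσ : 0 ≤ σ) (hφ : IntegrableOn φ (Ioc a b)) :
    ∫ t, G t * ∫ τ in Ioc a b, φ τ * ((c * τ : ℝ) : ℂ) ^ ((σ : ℂ) + t * I)
      = ∫ τ in Ioc a b, φ τ * ∫ t, G t * ((c * τ : ℝ) : ℂ) ^ ((σ : ℂ) + t * I) := by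
  set K : ℝ → ℝ → ℂ := fun t τ => ((c * τ : ℝ) : ℂ) ^ ((σ : ℂ) + t * I)
  have hK_meas : Measurable (Function.uncurry K) :=
    (measurable_ofReal.comp (measurable_const.mul measurable_snd)).pow
      (measurable_const.add ((measurable_ofReal.comp measurable_fst).mul_const I))
  have hK_le : ∀ t, ∀ τ ∈ Ioc a b, ‖K t τ‖ ≤ (c * b) ^ σ := fun t τ hτ => by
    have hcτ : 0 < c * τ := mul_pos hc (ha.trans_lt hτ.1)
    rw [norm_cpow_eq_rpow_re_of_pos hcτ]
    simpa using rpow_le_rpow hcτ.le (mul_le_mul_of_nonneg_left hτ.2 hc.le) hσ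
  have hint : Integrable (Function.uncurry fun t τ => G t * φ τ * K t τ)
      (volume.prod (volume.restrict (Ioc a b))) := by
    refine Integrable.mono' ((hG.norm.mul_prod hφ.norm).mul_const ((c * b) ^ σ))
      ((hG.aestronglyMeasurable.comp_fst.mul hφ.aestronglyMeasurable.comp_snd).mul
        hK_meas.aestronglyMeasurable) ?_
    filter_upwards [Measure.quasiMeasurePreserving_snd.ae (ae_restrict_mem measurableSet_Ioc)]
      with p hp
    simp only [Function.uncurry, norm_mul]
    gcongr
    exact hK_le p.1 p.2 hp
  calc ∫ t, G t * ∫ τ in Ioc a b, φ τ * K t τ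
      = ∫ t, ∫ τ in Ioc a b, G t * φ τ * K t τ := by
        simp only [mul_assoc, integral_const_mul]
    _ = ∫ τ in Ioc a b, ∫ t, G t * φ τ * K t τ := integral_integral_swap hint
    _ = ∫ τ in Ioc a b, φ τ * ∫ t, G t * K t τ := by
        simp only [mul_comm (G _) (φ _), mul_assoc, integral_const_mul]

theorem one_div_two_pi_mul_integral_eq_setIntegral {σ a b z : ℝ} (hσ : 0 < σ) (ha : 0 ≤ a)
    (hz : 0 < z) {F : ℝ → ℂ} (hF : Integrable fun t : ℝ => F t / ((σ : ℂ) + t * I))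
    {φ : ℝ → ℂ} (hφ : IntegrableOn φ (Ioc a b)) {U : ℂ → ℂ}
    (hU : ∀ t : ℝ, ((σ : ℂ) + t * I) * U ((σ : ℂ) + t * I)
      = ∫ τ in Ioc a b, φ τ * (τ : ℂ) ^ ((σ : ℂ) + t * I))
    {H : ℝ → ℂ} (hH : ∀ y : ℝ, 0 < y →
      H y = (1 / (2 * (π : ℂ))) *
        ∫ t : ℝ, F t * (y : ℂ) ^ ((σ : ℂ) + t * I) / ((σ : ℂ) + t * I)) :
    (1 / (2 * (π : ℂ))) * ∫ t : ℝ, F t * U ((σ : ℂ) + t * I) * (z : ℂ) ^ ((σ : ℂ) + t * I)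
      = ∫ τ in Ioc a b, φ τ * H (z * τ) := by
  have hw : ∀ t : ℝ, (σ : ℂ) + t * I ≠ 0 := fun t h => by
    simpa [hσ.ne'] using congrArg re h
  have hscale : ∀ t : ℝ, F t * U ((σ : ℂ) + t * I) * (z : ℂ) ^ ((σ : ℂ) + t * I)
      = F t / ((σ : ℂ) + t * I) *
          ∫ τ in Ioc a b, φ τ * ((z * τ : ℝ) : ℂ) ^ ((σ : ℂ) + t * I) := fun t => by
    have : ∫ τ in Ioc a b, φ τ * ((z * τ : ℝ) : ℂ) ^ ((σ : ℂ) + t * I)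
        = (z : ℂ) ^ ((σ : ℂ) + t * I) * (((σ : ℂ) + t * I) * U ((σ : ℂ) + t * I)) := by
      rw [hU, ← integral_const_mul]
      refine setIntegral_congr_fun measurableSet_Ioc fun τ hτ => ?_
      rw [ofReal_mul, mul_cpow_ofReal_nonneg hz.le (ha.trans hτ.1.le)]
      ring
    rw [this]
    field_simp [hw t]
  simp only [hscale]
  rw [integral_mul_setIntegral_cpow_comm hF ha hz hσ.le hφ, ← integral_const_mul]
  refine setIntegral_congr_fun measurableSet_Ioc fun τ hτ => ?_
  rw [hH (z * τ) (mul_pos hz (ha.trans_lt hτ.1))]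
  simp only [div_mul_eq_mul_div]
  ring

theorem stmt_16_general (σ ε C₀ x z : ℝ) (hσ : 0 < σ) (hε : 0 < ε)
    (hx : 1 < x) (hz : 0 < z)
    (u : ℝ → ℝ) (hu_smooth : ContDiff ℝ 1 u) (hu_mono : Antitone u)
    (hu_one : ∀ t : ℝ, t ≤ 1 → u t = 1)
    (hu_zero : ∀ t : ℝ, 1 + 1 / x ≤ t → u t = 0)
    (U : ℂ → ℂ)
    (hU : ∀ w : ℂ, U w = ∫ t in Set.Ioi (0 : ℝ), (u t : ℂ) * (t : ℂ) ^ (w - 1))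
    (F : ℝ → ℂ) (hF_cont : Continuous F)
    (hF_bound : ∀ t : ℝ, ‖F t‖ ≤ C₀ * (1 + |t|) ^ (-ε))
    (H : ℝ → ℂ) (hH_smooth : ContDiffOn ℝ 1 H (Set.Ici 0))
    (hH : ∀ y : ℝ, 0 < y →
      H y = (1 / (2 * (π : ℂ))) *
        ∫ t : ℝ, F t * (y : ℂ) ^ ((σ : ℂ) + t * Complex.I) / ((σ : ℂ) + t * Complex.I)) :
    ‖(1 / (2 * (π : ℂ))) *
          (∫ t : ℝ, F t * U ((σ : ℂ) + t * Complex.I) *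
            (z : ℂ) ^ ((σ : ℂ) + t * Complex.I)) - H z‖
      ≤ (z / x) * sSup ((fun y => ‖deriv H y‖) '' Set.Icc z (z * (1 + 1 / x))) := by
  set B := 1 + 1 / x
  have hB : 1 ≤ B := le_add_of_nonneg_right (by positivity)
  have hu_diff : Differentiable ℝ u := hu_smooth.differentiable one_ne_zero
  have hu'_cont : Continuous (deriv u) := hu_smooth.continuous_deriv le_rfl
  have hweight : ∫ τ in Ioc 1 B, -deriv u τ = 1 := by
    rw [integral_neg, ← intervalIntegral.integral_of_le hB,
      intervalIntegral.integral_deriv_eq_sub (fun t _ => hu_diff t)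
        (hu'_cont.intervalIntegrable 1 B), hu_zero B le_rfl, hu_one 1 le_rfl]
    norm_num
  have hsmoothed := one_div_two_pi_mul_integral_eq_setIntegral (b := B) (U := U)
    (φ := fun τ => ((-deriv u τ : ℝ) : ℂ)) hσ zero_le_one hz
    (integrable_div_ofReal_add_mul_I hσ hε hF_cont.aestronglyMeasurable hF_bound)
    (continuous_ofReal.comp hu'_cont.neg).integrableOn_Ioc
    (fun t => by
      rw [hU]
      exact mul_setIntegral_cpow_sub_one_eq_setIntegral_Ioc hu_smooth zero_le_one
        (zero_le_one.trans hB) hu_one hu_zero (by simpa using hσ))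
    hH
  set M := sSup ((fun y => ‖deriv H y‖) '' Icc z (z * B))
  have hM : 0 ≤ M := Real.sSup_nonneg fun _ ⟨_, _, h⟩ => h ▸ norm_nonneg _
  have hmvt : ∀ τ ∈ Ioc 1 B, ‖H (z * τ) - H z‖ ≤ z / x * M := fun τ hτ => by
    calc ‖H (z * τ) - H z‖ ≤ (z * τ - z) * M :=
          norm_sub_le_sSup_norm_deriv_mul (hH_smooth.mono Ioi_subset_Ici_self) isOpen_Ioi
            (fun y hy => hz.trans_le hy.1)
            ⟨le_mul_of_one_le_right hz.le hτ.1.le, mul_le_mul_of_nonneg_left hτ.2 hz.le⟩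
      _ ≤ (z * B - z) * M := by gcongr; exact hτ.2
      _ = z / x * M := by simp only [B]; ring
  have hHz_cont : ContinuousOn (fun τ => H (z * τ)) (Icc 1 B) :=
    hH_smooth.continuousOn.comp (by fun_prop) fun τ hτ => (mul_pos hz (one_pos.trans_le hτ.1)).le
  rw [hsmoothed]
  simp only [← real_smul]
  exact norm_integral_smul_sub_le
    (ae_restrict_of_forall_mem measurableSet_Ioc fun τ _ => neg_nonneg.mpr hu_mono.deriv_nonpos)
    hu'_cont.neg.integrableOn_Ioc hweight
    ((hu'_cont.neg.continuousOn.smul hHz_cont).integrableOn_Icc.mono_set Ioc_subset_Icc_self)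
    (ae_restrict_of_forall_mem measurableSet_Ioc hmvt)

theorem stmt_16 (σ ε C₀ x z : ℝ) (hσ : 0 < σ) (hε : 0 < ε) (hC₀ : 0 < C₀)
    (hx : 1 < x) (hz : 0 < z)
    (u : ℝ → ℝ) (hu_smooth : ContDiff ℝ 1 u) (hu_mono : Antitone u)
    (hu_nonneg : ∀ t, 0 ≤ u t) (hu_le_one : ∀ t, u t ≤ 1)
    (hu_one : ∀ t : ℝ, t ≤ 1 → u t = 1)
    (hu_zero : ∀ t : ℝ, 1 + 1 / x ≤ t → u t = 0)
    (U : ℂ → ℂ)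
    (hU : ∀ w : ℂ, U w = ∫ t in Set.Ioi (0 : ℝ), (u t : ℂ) * (t : ℂ) ^ (w - 1))
    (F : ℝ → ℂ) (hF_cont : Continuous F)
    (hF_bound : ∀ t : ℝ, ‖F t‖ ≤ C₀ * (1 + |t|) ^ (-ε))
    (H : ℝ → ℂ) (hH_smooth : ContDiffOn ℝ 1 H (Set.Ici 0))
    (hH : ∀ y : ℝ, 0 < y →
      H y = (1 / (2 * (π : ℂ))) *
        ∫ t : ℝ, F t * (y : ℂ) ^ ((σ : ℂ) + t * Complex.I) / ((σ : ℂ) + t * Complex.I)) :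
    ‖(1 / (2 * (π : ℂ))) *
          (∫ t : ℝ, F t * U ((σ : ℂ) + t * Complex.I) *
            (z : ℂ) ^ ((σ : ℂ) + t * Complex.I)) - H z‖
      ≤ (z / x) * sSup ((fun y => ‖deriv H y‖) '' Set.Icc z (z * (1 + 1 / x))) :=
  stmt_16_general σ ε C₀ x z hσ hε hx hz u hu_smooth hu_mono hu_one hu_zero U hU F hF_cont hF_bound
    H hH_smooth hH
end
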